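/- Let φ : ℝ → ℝ be a bounded nonnegative measurable function with vanishing mean value, i.e. lim_{L→∞} (1/(2L)) ∫_{-L}^L φ(t) dt = 0, and let k : (0,∞) → [0,∞) with ∫₀^∞ k(s) ds ≤ L̃ < ∞. Then the function ψ(t) = ∫₀^{∞} k(ξ) φ(t-ξ) dξ also has vanishing mean value: lim_{L→∞} (1/(2L)) ∫_{-L}^L ψ(t) dt = 0. -/

import Mathlib

/-
The mean of `φ` over `[-L, L]` is insensitive to a fixed shift `ξ`: for `φ ≥ 0`, the shifted window
`[-L - ξ, L - ξ]` lies in `[-(L + |ξ|), L + |ξ|]`, whose mean tends to `0` while the length ratio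
`(L + |ξ|) / L` tends to `1`. By Fubini, the mean of `ψ = ∫ k(ξ) φ(· - ξ) dξ` over `[-L, L]` is the
`k`-weighted average of these shifted means, each bounded by `sup φ`; dominated convergence with
dominating function `|k| sup φ` finishes the proof.
-/

open MeasureTheory Set Filter Topology

noncomputable def cesaroMean (f : ℝ → ℝ) (L : ℝ) : ℝ :=
  (1 / (2 * L)) * ∫ t in (-L)..L, f t

lemma abs_cesaroMean_le {f : ℝ → ℝ} {M L : ℝ} (hf : ∀ t, |f t| ≤ M) (hL : 0 < L) :
    |cesaroMean f L| ≤ M := by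
  have hintegral : |∫ t in (-L)..L, f t| ≤ M * |L - -L| :=
    intervalIntegral.norm_integral_le_of_norm_le_const fun t _ =>
      (Real.norm_eq_abs _).trans_le (hf t)
  rw [cesaroMean, abs_mul, abs_of_pos (by positivity : (0 : ℝ) < 1 / (2 * L))]
  calc 1 / (2 * L) * |∫ t in (-L)..L, f t| ≤ 1 / (2 * L) * (M * |L - -L|) := by gcongr
    _ = M := by rw [abs_of_pos (by linarith)]; field_simp; ring

lemma cesaroMean_comp_sub_le {f : ℝ → ℝ} (hf0 : ∀ t, 0 ≤ f t)
    (hfi : ∀ a b, IntervalIntegrable f volume a b) {L : ℝ} (hL : 0 < L) (ξ : ℝ) :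
    cesaroMean (fun t => f (t - ξ)) L ≤ (L + |ξ|) / L * cesaroMean f (L + |ξ|) := by
  have hwindow : ∫ t in (-L)..L, f (t - ξ) ≤ ∫ t in (-(L + |ξ|))..(L + |ξ|), f t := by
    rw [intervalIntegral.integral_comp_sub_right]
    exact intervalIntegral.integral_mono_interval (by linarith [le_abs_self ξ]) (by linarith)
      (by linarith [neg_abs_le ξ]) (.of_forall hf0) (hfi _ _)
  calc cesaroMean (fun t => f (t - ξ)) L ≤ 1 / (2 * L) * ∫ t in (-(L + |ξ|))..(L + |ξ|), f t := by
        unfold cesaroMean; gcongr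
    _ = (L + |ξ|) / L * cesaroMean f (L + |ξ|) := by
        unfold cesaroMean; field_simp

lemma tendsto_cesaroMean_comp_sub {f : ℝ → ℝ} (hf0 : ∀ t, 0 ≤ f t)
    (hfi : ∀ a b, IntervalIntegrable f volume a b) (hf : Tendsto (cesaroMean f) atTop (𝓝 0))
    (ξ : ℝ) : Tendsto (cesaroMean fun t => f (t - ξ)) atTop (𝓝 0) := by
  have hratio : Tendsto (fun L => (L + |ξ|) / L) atTop (𝓝 1) := by
    have h := tendsto_const_nhds (x := (1 : ℝ)).add
      ((tendsto_const_nhds (x := |ξ|)).div_atTop tendsto_id)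
    rw [add_zero] at h
    refine h.congr' ?_
    filter_upwards [eventually_gt_atTop 0] with L hL
    simp only [id]; field_simp
  have hshifted : Tendsto (fun L => cesaroMean f (L + |ξ|)) atTop (𝓝 0) :=
    hf.comp (tendsto_atTop_add_const_right _ _ tendsto_id)
  have hupper := hratio.mul hshifted
  rw [mul_zero] at hupper
  refine tendsto_of_tendsto_of_tendsto_of_le_of_le' tendsto_const_nhds hupper ?_ ?_
  · filter_upwards [eventually_gt_atTop 0] with L hL
    exact mul_nonneg (by positivity)
      (intervalIntegral.integral_nonneg (by linarith) fun t _ => hf0 _)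
  · filter_upwards [eventually_gt_atTop 0] with L hL
    exact cesaroMean_comp_sub_le hf0 hfi hL ξ

section Convolution

variable {μ : Measure ℝ} {k φ : ℝ → ℝ} {M : ℝ}

lemma stronglyMeasurable_intervalIntegral_comp_sub (hφ : Measurable φ) (a b : ℝ) :
    StronglyMeasurable fun ξ => ∫ t in a..b, φ (t - ξ) := by
  simp only [intervalIntegral.intervalIntegral_eq_integral_uIoc]
  exact (StronglyMeasurable.integral_prod_right (ν := volume.restrict (uIoc a b))
    (f := fun ξ t => φ (t - ξ))
    (hφ.comp (measurable_snd.sub measurable_fst)).stronglyMeasurable).const_smul (𝕜 := ℝ) _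

lemma intervalIntegral_integral_mul_comp_sub [SFinite μ] (hk : Integrable k μ)
    (hφm : Measurable φ) (hφb : ∀ t, |φ t| ≤ M) {a b : ℝ} (hab : a ≤ b) :
    ∫ t in a..b, ∫ ξ, k ξ * φ (t - ξ) ∂μ = ∫ ξ, k ξ * (∫ t in a..b, φ (t - ξ)) ∂μ := by
  have hprod : Integrable (fun p : ℝ × ℝ => k p.2 * φ (p.1 - p.2))
      ((volume.restrict (Ioc a b)).prod μ) := by
    have : IsFiniteMeasure (volume.restrict (Ioc a b)) := ⟨by simp⟩
    exact (hk.comp_snd _).mul_bdd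
      (hφm.comp (measurable_fst.sub measurable_snd)).aestronglyMeasurable
      (.of_forall fun p => (Real.norm_eq_abs _).trans_le (hφb _))
  rw [intervalIntegral.integral_of_le hab, integral_integral_swap hprod]
  congr 1 with ξ
  rw [intervalIntegral.integral_of_le hab, integral_const_mul]

lemma cesaroMean_integral_mul_comp_sub [SFinite μ] (hk : Integrable k μ)
    (hφm : Measurable φ) (hφb : ∀ t, |φ t| ≤ M) {L : ℝ} (hL : 0 ≤ L) :
    cesaroMean (fun t => ∫ ξ, k ξ * φ (t - ξ) ∂μ) L
      = ∫ ξ, k ξ * cesaroMean (fun t => φ (t - ξ)) L ∂μ := by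
  rw [cesaroMean, intervalIntegral_integral_mul_comp_sub hk hφm hφb (by linarith : -L ≤ L),
    ← integral_const_mul]
  simp only [cesaroMean, mul_left_comm]

theorem tendsto_cesaroMean_integral_mul_comp_sub [SFinite μ] (hk : Integrable k μ)
    (hφm : Measurable φ) (hφ0 : ∀ t, 0 ≤ φ t) (hφb : ∀ t, φ t ≤ M)
    (hφ : Tendsto (cesaroMean φ) atTop (𝓝 0)) :
    Tendsto (cesaroMean fun t => ∫ ξ, k ξ * φ (t - ξ) ∂μ) atTop (𝓝 0) := by
  have habs : ∀ t, |φ t| ≤ M := fun t => (abs_of_nonneg (hφ0 t)).trans_le (hφb t)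
  have hφi : ∀ a b, IntervalIntegrable φ volume a b := fun a b =>
    intervalIntegrable_iff.2 <| Measure.integrableOn_of_bounded (M := M) (by simp)
      hφm.aestronglyMeasurable (.of_forall fun t => (Real.norm_eq_abs _).trans_le (habs t))
  have hlim : Tendsto (fun L => ∫ ξ, k ξ * cesaroMean (fun t => φ (t - ξ)) L ∂μ) atTop
      (𝓝 (∫ _, (0 : ℝ) ∂μ)) := by
    refine tendsto_integral_filter_of_dominated_convergence (fun ξ => ‖k ξ‖ * M) ?_ ?_
      (hk.norm.mul_const M) (.of_forall fun ξ => ?_)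
    · refine .of_forall fun L => hk.aestronglyMeasurable.mul ?_
      exact (stronglyMeasurable_const.mul
        (stronglyMeasurable_intervalIntegral_comp_sub hφm _ _)).aestronglyMeasurable
    · filter_upwards [eventually_gt_atTop 0] with L hL
      refine .of_forall fun ξ => ?_
      rw [norm_mul, Real.norm_eq_abs (cesaroMean _ L)]
      exact mul_le_mul_of_nonneg_left (abs_cesaroMean_le (fun t => habs _) hL) (norm_nonneg _)
    · simpa using (tendsto_cesaroMean_comp_sub hφ0 hφi hφ ξ).const_mul (k ξ)
  rw [integral_zero] at hlim
  refine hlim.congr' ?_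
  filter_upwards [eventually_ge_atTop 0] with L hL
  exact (cesaroMean_integral_mul_comp_sub hk hφm habs hL).symm

end Convolution

theorem stmt5_general (φ k : ℝ → ℝ) (hφm : Measurable φ) (hφ0 : ∀ t, 0 ≤ φ t)
    (M : ℝ) (hφb : ∀ t, φ t ≤ M)
    (hφmean : Tendsto (fun L : ℝ => (1 / (2 * L)) * ∫ t in (-L)..L, φ t)
      atTop (nhds 0))
    (hkint : IntegrableOn k (Ioi (0 : ℝ))) :
    Tendsto
      (fun L : ℝ => (1 / (2 * L)) * ∫ t in (-L)..L, ∫ ξ in Ioi (0 : ℝ), k ξ * φ (t - ξ))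
      atTop (nhds 0) :=
  tendsto_cesaroMean_integral_mul_comp_sub hkint hφm hφ0 hφb hφmean

/-- Convolution of a bounded nonnegative function `φ` with vanishing
Cesàro mean against a nonnegative integrable kernel `k` again has vanishing mean. -/
theorem stmt5 (φ k : ℝ → ℝ) (hφm : Measurable φ) (hφ0 : ∀ t, 0 ≤ φ t)
    (M : ℝ) (hφb : ∀ t, φ t ≤ M)
    (hφmean : Tendsto (fun L : ℝ => (1 / (2 * L)) * ∫ t in (-L)..L, φ t)
      atTop (nhds 0))
    (hk0 : ∀ s, 0 ≤ k s) (hkm : Measurable k)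
    (hkint : IntegrableOn k (Ioi (0 : ℝ))) (L' : ℝ)
    (hkL : (∫ s in Ioi (0 : ℝ), k s) ≤ L') :
    Tendsto
      (fun L : ℝ => (1 / (2 * L)) * ∫ t in (-L)..L, ∫ ξ in Ioi (0 : ℝ), k ξ * φ (t - ξ))
      atTop (nhds 0) :=
  stmt5_general φ k hφm hφ0 M hφb hφmean hkint
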